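/- Let (x*, y*) be a Nash equilibrium of a bimatrix game with payoffs in [0,1], with row-player payoff v_r and column-player payoff v_c, v_r ≥ v_c. Let e_j be a pure strategy in the support of y* such that x*^T M_row e_j ≥ v_r, and let e_k be a best response of the row player to e_j. If (x*, e_j) is not a 1/2-approximate equilibrium, then v_r ≤ 1/2, and the pair ((x* + e_k)/2, e_j) is a 1/2-approximate equilibrium with value at least (v_r + v_c)/2. -/
import Mathlib


/-- The payoff of a player with payoff matrix `M` under mixed strategies `x, y`. -/
def payoff8 {n : ℕ} (M : Fin n → Fin n → ℝ) (x y : Fin n → ℝ) : ℝ :=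
  ∑ i, ∑ j, x i * M i j * y j

/-- `x` is a mixed strategy. -/
def IsMixed8 {n : ℕ} (x : Fin n → ℝ) : Prop :=
  (∀ i, 0 ≤ x i) ∧ ∑ i, x i = 1

/-- The pure strategy on the `i`-th action. -/
def pure8 {n : ℕ} (i : Fin n) : Fin n → ℝ :=
  fun k => if k = i then 1 else 0

/-- `(x, y)` is an `ε`-approximate Nash equilibrium of the bimatrix game `(Mr, Mc)`. -/
def IsEpsEq8 {n : ℕ} (Mr Mc : Fin n → Fin n → ℝ) (ε : ℝ) (x y : Fin n → ℝ) : Prop :=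
  (∀ i, payoff8 Mr (pure8 i) y ≤ payoff8 Mr x y + ε) ∧
  (∀ j, payoff8 Mc x (pure8 j) ≤ payoff8 Mc x y + ε)

/-- The value of a strategy pair: the average of the two players' payoffs. -/
noncomputable def value8 {n : ℕ} (Mr Mc : Fin n → Fin n → ℝ) (x y : Fin n → ℝ) : ℝ :=
  (payoff8 Mr x y + payoff8 Mc x y) / 2




lemma pay_pl {n : ℕ} (M : Fin n → Fin n → ℝ) (i : Fin n) (y : Fin n → ℝ) :
    payoff8 M (pure8 i) y = ∑ j, M i j * y j := by
  simp [payoff8, pure8, ite_mul, Finset.sum_ite_eq']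

lemma pay_pr {n : ℕ} (M : Fin n → Fin n → ℝ) (x : Fin n → ℝ) (j : Fin n) :
    payoff8 M x (pure8 j) = ∑ i, x i * M i j := by
  simp [payoff8, pure8, mul_ite, Finset.sum_ite_eq']

lemma pay_pp {n : ℕ} (M : Fin n → Fin n → ℝ) (i j : Fin n) :
    payoff8 M (pure8 i) (pure8 j) = M i j := by
  simp [pay_pl, pure8, mul_ite, Finset.sum_ite_eq']

lemma pay_expand {n : ℕ} (M : Fin n → Fin n → ℝ) (x y : Fin n → ℝ) :
    payoff8 M x y = ∑ j, y j * payoff8 M x (pure8 j) := by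
  rw [payoff8, Finset.sum_comm]
  refine Finset.sum_congr rfl fun j _ => ?_
  rw [pay_pr, Finset.mul_sum]
  exact Finset.sum_congr rfl fun i _ => by ring

lemma pay_avg {n : ℕ} (M : Fin n → Fin n → ℝ) (x w y : Fin n → ℝ) :
    payoff8 M (fun i => (x i + w i) / 2) y = (payoff8 M x y + payoff8 M w y) / 2 := by
  simp only [payoff8, ← Finset.sum_add_distrib, Finset.sum_div]
  exact Finset.sum_congr rfl fun i _ => Finset.sum_congr rfl fun j _ => by ring

lemma pay_nonneg {n : ℕ} {M : Fin n → Fin n → ℝ} (hM : ∀ i j, M i j ∈ Set.Icc (0:ℝ) 1)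
    {x y : Fin n → ℝ} (hx : ∀ i, 0 ≤ x i) (hy : ∀ i, 0 ≤ y i) :
    0 ≤ payoff8 M x y := by
  refine Finset.sum_nonneg fun i _ => Finset.sum_nonneg fun j _ => ?_
  exact mul_nonneg (mul_nonneg (hx i) (hM i j).1) (hy j)

lemma pay_le_one {n : ℕ} {M : Fin n → Fin n → ℝ} (hM : ∀ i j, M i j ∈ Set.Icc (0:ℝ) 1)
    {x y : Fin n → ℝ} (hx : (∀ i, 0 ≤ x i) ∧ ∑ i, x i = 1)
    (hy : (∀ i, 0 ≤ y i) ∧ ∑ i, y i = 1) :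
    payoff8 M x y ≤ 1 := by
  have : payoff8 M x y ≤ ∑ i, ∑ j, x i * y j := by
    refine Finset.sum_le_sum fun i _ => Finset.sum_le_sum fun j _ => ?_
    calc x i * M i j * y j ≤ x i * 1 * y j := by
          exact mul_le_mul_of_nonneg_right (mul_le_mul_of_nonneg_left (hM i j).2 (hx.1 i)) (hy.1 j)
      _ = x i * y j := by ring
  calc payoff8 M x y ≤ ∑ i, ∑ j, x i * y j := this
    _ = (∑ i, x i) * (∑ j, y j) := by rw [Finset.sum_mul_sum]
    _ = 1 := by rw [hx.2, hy.2]; ring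

lemma pure_mixed8 {n : ℕ} (j : Fin n) : IsMixed8 (pure8 j) := by
  constructor
  · intro i; unfold pure8; positivity
  · simp [pure8, Finset.sum_ite_eq']

theorem stmt_8 {n : ℕ} (Mr Mc : Fin n → Fin n → ℝ)
    (hMr : ∀ i j, Mr i j ∈ Set.Icc (0:ℝ) 1) (hMc : ∀ i j, Mc i j ∈ Set.Icc (0:ℝ) 1)
    (xs ys : Fin n → ℝ) (hx : IsMixed8 xs) (hy : IsMixed8 ys)
    (hNash : IsEpsEq8 Mr Mc 0 xs ys)
    (vr vc : ℝ) (hvr : vr = payoff8 Mr xs ys) (hvc : vc = payoff8 Mc xs ys)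
    (hge : vr ≥ vc)
    (j : Fin n) (hjsupp : ys j > 0) (hjval : payoff8 Mr xs (pure8 j) ≥ vr)
    (k : Fin n) (hk : ∀ i, payoff8 Mr (pure8 i) (pure8 j) ≤ payoff8 Mr (pure8 k) (pure8 j))
    (hnot : ¬ IsEpsEq8 Mr Mc (1/2) xs (pure8 j)) :
    vr ≤ 1/2 ∧
      IsEpsEq8 Mr Mc (1/2) (fun i => (xs i + pure8 k i) / 2) (pure8 j) ∧
      value8 Mr Mc (fun i => (xs i + pure8 k i) / 2) (pure8 j) ≥ (vr + vc) / 2 := by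
  -- column payoffs against pure strategies
  set c : Fin n → ℝ := fun j' => payoff8 Mc xs (pure8 j') with hc
  have hcle : ∀ j', c j' ≤ vc := by
    intro j'; have := hNash.2 j'; rw [hvc]; simpa using this
  have hsum : vc = ∑ j', ys j' * c j' := by rw [hvc, pay_expand]
  -- j is in the support of ys, hence a best response for the column player
  have hcj : c j = vc := by
    by_contra h
    have hlt : c j < vc := lt_of_le_of_ne (hcle j) h
    have hstrict : ∑ j', ys j' * c j' < ∑ j', ys j' * vc := by
      refine Finset.sum_lt_sum (fun i _ => mul_le_mul_of_nonneg_left (hcle i) (hy.1 i))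
        ⟨j, Finset.mem_univ j, ?_⟩
      exact mul_lt_mul_of_pos_left hlt hjsupp
    rw [← Finset.sum_mul, hy.2, one_mul] at hstrict
    linarith [hsum]
  -- so the column player cannot gain more than 1/2 at (xs, e_j)
  have hcol : ∀ j', payoff8 Mc xs (pure8 j') ≤ payoff8 Mc xs (pure8 j) + 1/2 := by
    intro j'
    have h1 := hcle j'
    have h2 : payoff8 Mc xs (pure8 j) = vc := hcj
    rw [h2]; simp only [hc] at h1; linarith
  -- the failure must come from a row deviation
  have hrow : ∃ i, payoff8 Mr xs (pure8 j) + 1/2 < payoff8 Mr (pure8 i) (pure8 j) := by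
    by_contra h
    push_neg at h
    exact hnot ⟨fun i => h i, hcol⟩
  obtain ⟨i0, hi0⟩ := hrow
  set a : ℝ := payoff8 Mr xs (pure8 j) with ha
  have hb : payoff8 Mr (pure8 k) (pure8 j) = Mr k j := pay_pp Mr k j
  have hbk : a + 1/2 < Mr k j := by
    have := hk i0; rw [hb] at this; linarith
  have hb1 : Mr k j ≤ 1 := (hMr k j).2
  have ha0 : 0 ≤ a := pay_nonneg hMr hx.1 (pure_mixed8 j).1
  have ha1 : a ≤ 1 := pay_le_one hMr hx (pure_mixed8 j)
  have hvc0 : 0 ≤ vc := by rw [hvc]; exact pay_nonneg hMc hx.1 hy.1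
  have hvrhalf : vr ≤ 1/2 := by linarith
  refine ⟨hvrhalf, ⟨?_, ?_⟩, ?_⟩
  · -- row condition for the mixed pair
    intro i
    rw [pay_avg, ← ha, hb]
    have h1 := hk i
    rw [hb] at h1
    linarith
  · -- column condition
    intro j'
    rw [pay_avg, pay_avg, pay_pp, pay_pp]
    have h1 : payoff8 Mc xs (pure8 j') ≤ vc := hcle j'
    have h4 : payoff8 Mc xs (pure8 j) = vc := hcj
    have h2 : Mc k j' ≤ 1 := (hMc k j').2
    have h3 : 0 ≤ Mc k j := (hMc k j).1
    linarith
  · -- value bound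
    rw [value8, pay_avg, pay_avg, pay_pp, pay_pp, ← ha]
    have h2 : payoff8 Mc xs (pure8 j) = vc := hcj
    rw [h2]
    have h3 : 0 ≤ Mc k j := (hMc k j).1
    linarith
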